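/- arXiv:1609.04593 — 2 statements merged into one kernel-verified Lean document; each statement's English description precedes it below -/
import Mathlib

section
/- Let G be a connected finite graph with a shortest path v_0,...,v_t of eccentricity k. Let P be a shortest path of G, and let i_min (resp. i_max) be the smallest (resp. largest) index i such that d(v_i, P) ≤ k. Then every vertex of G at distance at most k from the subpath v_{i_min},...,v_{i_max} is at distance at most 3k from P. -/
open SimpleGraph

variable {V : Type*}

/-- Distance from a vertex `x` to (the support of) a walk `p`. -/
noncomputable def walkDist (G : SimpleGraph V) {u v : V} (x : V) (p : G.Walk u v) : ℕ :=
  sInf {n | ∃ w ∈ p.support, G.dist x w = n}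

/-- A walk is a shortest path when its length equals the distance between its ends. -/
noncomputable def IsShortestPath (G : SimpleGraph V) {u v : V} (p : G.Walk u v) : Prop :=
  p.length = G.dist u v

/-- Eccentricity of a walk: the largest distance from any vertex to the walk. -/
noncomputable def walkEcc [Fintype V] (G : SimpleGraph V) {u v : V} (p : G.Walk u v) : ℕ :=
  sSup {n | ∃ x : V, walkDist G x p = n}

/-- A diameter: a shortest path of maximum length among all distances. -/
noncomputable def IsDiameter [Fintype V] (G : SimpleGraph V) {u v : V} (p : G.Walk u v) : Prop :=
  IsShortestPath G p ∧ ∀ a b : V, G.dist a b ≤ p.length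

/-- `k(G)`: minimum eccentricity over all shortest paths. -/
noncomputable def minK [Fintype V] (G : SimpleGraph V) : ℕ :=
  sInf {n | ∃ (u v : V) (p : G.Walk u v), IsShortestPath G p ∧ walkEcc G p = n}

/-- `l(G)`: minimum eccentricity over all diameters. -/
noncomputable def minL [Fintype V] (G : SimpleGraph V) : ℕ :=
  sInf {n | ∃ (u v : V) (p : G.Walk u v), IsDiameter G p ∧ walkEcc G p = n}

/-- `s(G)`: maximum eccentricity over all diameters. -/
noncomputable def maxS [Fintype V] (G : SimpleGraph V) : ℕ :=
  sSup {n | ∃ (u v : V) (p : G.Walk u v), IsDiameter G p ∧ walkEcc G p = n}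

/-!
Every vertex `q` of `Q` lies within `k` of some vertex `v_{π q}` of `P`, and since `P` is a
geodesic, `π` moves by at most `2k + 1` along an edge of `Q`. Walking along `Q` between vertices
near `v_{i_min}` and `v_{i_max}`, the index `π q` therefore passes within `k` of every `i` in
between, so `d(v_i, Q) ≤ 2k`; the remaining `k` comes from the distance of `z` to `v_i`.
-/

section

variable {G : SimpleGraph V}

theorem walkDist_le_iff {u v x : V} {p : G.Walk u v} {k : ℕ} :
    walkDist G x p ≤ k ↔ ∃ w ∈ p.support, G.dist x w ≤ k := by
  rw [walkDist]
  constructor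
  · intro h
    have hne : {n | ∃ w ∈ p.support, G.dist x w = n}.Nonempty :=
      ⟨G.dist x u, u, p.start_mem_support, rfl⟩
    obtain ⟨w, hw, hd⟩ := Nat.sInf_mem hne
    exact ⟨w, hw, hd.le.trans h⟩
  · rintro ⟨w, hw, hd⟩
    exact le_trans (Nat.sInf_le ⟨w, hw, rfl⟩) hd

theorem SimpleGraph.Walk.dist_getVert_le_sub {u v : V} (p : G.Walk u v) {i j : ℕ} (hij : i ≤ j) :
    G.dist (p.getVert i) (p.getVert j) ≤ j - i := by
  have h := dist_le ((p.drop i).take (j - i))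
  rw [Walk.take_length, Walk.drop_getVert, Nat.add_sub_cancel' hij] at h
  exact h.trans inf_le_left

theorem le_add_dist_getVert_of_isShortestPath (hG : G.Connected) {u v : V} {p : G.Walk u v}
    (hp : IsShortestPath G p) (i : ℕ) {j : ℕ} (hj : j ≤ p.length) :
    j ≤ i + G.dist (p.getVert i) (p.getVert j) := by
  rcases le_or_gt j i with hji | hij
  · omega
  have hi : G.dist u (p.getVert i) ≤ i := by simpa using p.dist_getVert_le_sub i.zero_le
  have hj' : G.dist (p.getVert j) v ≤ p.length - j := by simpa using p.dist_getVert_le_sub hj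
  have hp' : p.length = G.dist u v := hp
  have := hG.dist_triangle (u := u) (v := p.getVert i) (w := p.getVert j)
  have := hG.dist_triangle (u := u) (v := p.getVert j) (w := v)
  omega

theorem dist_getVert_le_two_mul_of_near (hG : G.Connected) {u v q : V} (p : G.Walk u v)
    {i j k : ℕ} (hij : i ≤ j + k) (hji : j ≤ i + k) (hjq : G.dist (p.getVert j) q ≤ k) :
    G.dist (p.getVert i) q ≤ 2 * k := by
  have hvij : G.dist (p.getVert i) (p.getVert j) ≤ k := by
    rcases le_total i j with h | h
    · exact (p.dist_getVert_le_sub h).trans (by omega)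
    · exact (G.dist_comm ▸ p.dist_getVert_le_sub h).trans (by omega)
  have := hG.dist_triangle (u := p.getVert i) (v := p.getVert j) (w := q)
  omega

/-- Two vertices of a geodesic within `k` of a common vertex `q` are at most `2k` apart, so
every vertex of the geodesic between them is within `k` of one of them. -/
theorem dist_getVert_le_two_mul_of_between (hG : G.Connected) {u v q : V} {p : G.Walk u v}
    (hp : IsShortestPath G p) {j i j' k : ℕ} (hji : j ≤ i) (hij' : i ≤ j') (hj' : j' ≤ p.length)
    (hjq : G.dist (p.getVert j) q ≤ k) (hj'q : G.dist (p.getVert j') q ≤ k) :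
    G.dist (p.getVert i) q ≤ 2 * k := by
  have hjj' := le_add_dist_getVert_of_isShortestPath hG hp j hj'
  have := hG.dist_triangle (u := p.getVert j) (v := q) (w := p.getVert j')
  rw [G.dist_comm (u := q)] at this
  rcases le_total i (j + k) with h | h
  · exact dist_getVert_le_two_mul_of_near hG p h (by omega) hjq
  · exact dist_getVert_le_two_mul_of_near hG p (by omega) (by omega) hj'q

/-- A discrete intermediate value theorem. -/
theorem SimpleGraph.Walk.exists_mem_support_near {f : V → ℕ} {k i : ℕ}
    (hf : ∀ ⦃x y⦄, G.Adj x y → f y ≤ f x + (2 * k + 1)) :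
    ∀ {a b : V} (W : G.Walk a b) {x y : V}, x ∈ W.support → y ∈ W.support →
      f x ≤ i → i ≤ f y → ∃ z ∈ W.support, f z ≤ i + k ∧ i ≤ f z + k
  | _, _, .nil, x, y, hx, hy, hxi, hiy => by
    rw [Walk.support_nil, List.mem_singleton] at hx hy
    obtain rfl := hx
    obtain rfl := hy
    exact ⟨y, by simp, by omega, by omega⟩
  | a, _, .cons (v := w) h p, x, y, hx, hy, hxi, hiy => by
    have near_of_edge : ∀ s t, s ∈ (Walk.cons h p).support → t ∈ (Walk.cons h p).support →
        f s ≤ i → i ≤ f t → f t ≤ f s + (2 * k + 1) →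
        ∃ z ∈ (Walk.cons h p).support, f z ≤ i + k ∧ i ≤ f z + k := by
      intro s t hs ht hsi hit hst
      by_cases hs' : i ≤ f s + k
      exacts [⟨s, hs, by omega, hs'⟩, ⟨t, ht, by omega, by omega⟩]
    have ha : a ∈ (Walk.cons h p).support := Walk.start_mem_support _
    have hw : w ∈ (Walk.cons h p).support := by simp
    rw [Walk.support_cons, List.mem_cons] at hx hy
    rcases le_total (f w) i with hwi | hiw
    · rcases hy with rfl | hy
      · exact near_of_edge w y hw ha hwi hiy (hf h.symm)
      · obtain ⟨z, hz, hzi⟩ := p.exists_mem_support_near hf p.start_mem_support hy hwi hiy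
        exact ⟨z, List.mem_cons_of_mem _ hz, hzi⟩
    · rcases hx with rfl | hx
      · exact near_of_edge x w ha hw hxi hiw (hf h)
      · obtain ⟨z, hz, hzi⟩ := p.exists_mem_support_near hf hx p.start_mem_support hxi hiw
        exact ⟨z, List.mem_cons_of_mem _ hz, hzi⟩

theorem walkDist_getVert_le_two_mul (hG : G.Connected) {v0 vt x0 xs : V} {P : G.Walk v0 vt}
    (hP : IsShortestPath G P) {k : ℕ} (hecc : ∀ z : V, walkDist G z P ≤ k) (Q : G.Walk x0 xs)
    {a i b : ℕ} (hai : a ≤ i) (hib : i ≤ b) (hb : b ≤ P.length)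
    (haQ : walkDist G (P.getVert a) Q ≤ k) (hbQ : walkDist G (P.getVert b) Q ≤ k) :
    walkDist G (P.getVert i) Q ≤ 2 * k := by
  obtain ⟨qa, hqa, hdqa⟩ := walkDist_le_iff.mp haQ
  obtain ⟨qb, hqb, hdqb⟩ := walkDist_le_iff.mp hbQ
  have hproj : ∀ x, ∃ j ≤ P.length, G.dist (P.getVert j) x ≤ k := fun x => by
    obtain ⟨w, hw, hxw⟩ := walkDist_le_iff.mp (hecc x)
    obtain ⟨j, rfl, hj⟩ := Walk.mem_support_iff_exists_getVert.mp hw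
    exact ⟨j, hj, G.dist_comm ▸ hxw⟩
  choose proj hproj_le hproj_dist using hproj
  have hproj_adj : ∀ ⦃x y⦄, G.Adj x y → proj y ≤ proj x + (2 * k + 1) := fun x y hxy => by
    have := le_add_dist_getVert_of_isShortestPath hG hP (proj x) (hproj_le y)
    have := hG.dist_triangle (u := P.getVert (proj x)) (v := x) (w := P.getVert (proj y))
    have := hG.dist_triangle (u := x) (v := y) (w := P.getVert (proj y))
    have := dist_eq_one_iff_adj.mpr hxy
    have := hproj_dist x
    have := G.dist_comm (u := y) ▸ hproj_dist y
    omega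
  refine walkDist_le_iff.mpr ?_
  rcases le_or_gt i (proj qa) with hia | hqa_i
  · exact ⟨qa, hqa, dist_getVert_le_two_mul_of_between hG hP hai hia (hproj_le qa) hdqa
      (hproj_dist qa)⟩
  rcases le_or_gt (proj qb) i with hbi | hi_qb
  · exact ⟨qb, hqb, dist_getVert_le_two_mul_of_between hG hP hbi hib hb (hproj_dist qb) hdqb⟩
  obtain ⟨q, hq, hqi, hiq⟩ := Q.exists_mem_support_near hproj_adj hqa hqb hqa_i.le hi_qb.le
  exact ⟨q, hq, dist_getVert_le_two_mul_of_near hG P hiq hqi (hproj_dist q)⟩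

end

theorem stmt1_general (G : SimpleGraph V) (hG : G.Connected)
    {v0 vt x0 xs : V} (P : G.Walk v0 vt) (hP : IsShortestPath G P) (k : ℕ)
    (hecc : ∀ z : V, walkDist G z P ≤ k)
    (Q : G.Walk x0 xs)
    (imin imax : ℕ)
    (himin2 : walkDist G (P.getVert imin) Q ≤ k)
    (himax1 : imax ≤ P.length) (himax2 : walkDist G (P.getVert imax) Q ≤ k) :
    ∀ z : V, (∃ i, imin ≤ i ∧ i ≤ imax ∧ G.dist z (P.getVert i) ≤ k) →
      walkDist G z Q ≤ 3 * k := by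
  rintro z ⟨i, hmin, hmax, hzi⟩
  obtain ⟨q, hq, hiq⟩ := walkDist_le_iff.mp
    (walkDist_getVert_le_two_mul hG hP hecc Q hmin hmax himax1 himin2 himax2)
  have := hG.dist_triangle (u := z) (v := P.getVert i) (w := q)
  exact walkDist_le_iff.mpr ⟨q, hq, by omega⟩

theorem stmt1 [Fintype V] (G : SimpleGraph V) (hG : G.Connected)
    {v0 vt x0 xs : V} (P : G.Walk v0 vt) (hP : IsShortestPath G P) (k : ℕ)
    (hecc : ∀ z : V, walkDist G z P ≤ k)
    (Q : G.Walk x0 xs) (hQ : IsShortestPath G Q)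
    (imin imax : ℕ)
    (himin1 : imin ≤ P.length) (himin2 : walkDist G (P.getVert imin) Q ≤ k)
    (himin3 : ∀ i < imin, ¬ walkDist G (P.getVert i) Q ≤ k)
    (himax1 : imax ≤ P.length) (himax2 : walkDist G (P.getVert imax) Q ≤ k)
    (himax3 : ∀ i, i ≤ P.length → imax < i → ¬ walkDist G (P.getVert i) Q ≤ k) :
    ∀ z : V, (∃ i, imin ≤ i ∧ i ≤ imax ∧ G.dist z (P.getVert i) ≤ k) →
      walkDist G z Q ≤ 3 * k :=
  stmt1_general G hG P hP k hecc Q imin imax himin2 himax1 himax2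
end

section
/- Let G be a connected graph with a shortest path v_0,...,v_t of eccentricity k. Let x,y be vertices of G and let i_min (resp. i_max) be the smallest (resp. largest) index i such that d(v_i,{x,y}) ≤ k. If i_min ≤ k and i_max ≥ t - k, then any shortest path Q between x and y has eccentricity at most 3k in G. -/
/-!
Every vertex `z` is within `k` of some `v_i`, so it suffices to find a vertex of `Q` within `2k`
of `v_i`. If `i < imin` or `i > imax`, an endpoint of `Q` does, because `imin ≤ k` and
`imax ≥ t - k`. Otherwise `Q` has a vertex within `k` of `v_imin` and one within `k` of `v_imax`.
If all of `Q` stayed more than `2k` away from `v_i`, each vertex of `Q` would project onto `P`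
either more than `k` before `i` or more than `k` after it, with both sides occurring; an edge of
`Q` between the two sides would join vertices whose projections are more than `2k + 1` apart along
the geodesic `P`, which is impossible.
-/

open SimpleGraph

variable {V : Type*}

namespace SimpleGraph

variable {G : SimpleGraph V}

lemma exists_mem_support_dist_eq_walkDist {u v : V} (x : V) (p : G.Walk u v) :
    ∃ w ∈ p.support, G.dist x w = walkDist G x p :=
  Nat.sInf_mem (s := {n | ∃ w ∈ p.support, G.dist x w = n}) ⟨_, u, p.start_mem_support, rfl⟩

lemma exists_getVert_dist_le_of_walkDist_le {u v z : V} {p : G.Walk u v}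
    {k : ℕ} (h : walkDist G z p ≤ k) : ∃ j ≤ p.length, G.dist (p.getVert j) z ≤ k := by
  obtain ⟨w, hw, hzw⟩ := exists_mem_support_dist_eq_walkDist z p
  obtain ⟨j, rfl, hj⟩ := Walk.mem_support_iff_exists_getVert.mp hw
  exact ⟨j, hj, by rw [dist_comm, hzw]; exact h⟩

lemma walkEcc_le_of_forall_exists_dist_le [Fintype V] {u v : V} {p : G.Walk u v} {m : ℕ}
    (h : ∀ z, ∃ q ∈ p.support, G.dist z q ≤ m) : walkEcc G p ≤ m := by
  refine csSup_le (s := {n | ∃ x, walkDist G x p = n}) ⟨_, u, rfl⟩ ?_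
  rintro _ ⟨z, rfl⟩
  obtain ⟨q, hq, hzq⟩ := h z
  exact (Nat.sInf_le (s := {n | ∃ w ∈ p.support, G.dist z w = n}) ⟨q, hq, rfl⟩).trans hzq

lemma Walk.exists_adj_mem_support_of_mem_of_notMem {u v a b : V} (p : G.Walk u v) (S : Set V)
    (ha : a ∈ p.support) (hb : b ∈ p.support) (haS : a ∈ S) (hbS : b ∉ S) :
    ∃ c ∈ p.support, ∃ d ∈ p.support, G.Adj c d ∧ c ∈ S ∧ d ∉ S := by
  classical
  let r := (p.dropUntil a ha).append (p.dropUntil b hb).reverse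
  have hr : r.support ⊆ p.support := by
    intro w hw
    rcases (Walk.mem_support_append_iff _ _).mp hw with hw | hw
    · exact Walk.support_dropUntil_subset_support p ha hw
    · exact Walk.support_dropUntil_subset_support p hb (by simpa using hw)
  obtain ⟨e, he, hfst, hsnd⟩ := r.exists_boundary_dart S haS hbS
  exact ⟨e.fst, hr (r.dart_fst_mem_support_of_mem_darts he),
    e.snd, hr (r.dart_snd_mem_support_of_mem_darts he), e.adj, hfst, hsnd⟩

lemma Walk.dist_getVert_le {u v : V} (p : G.Walk u v) {i j : ℕ} (hij : i ≤ j) :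
    G.dist (p.getVert i) (p.getVert j) ≤ j - i := by
  have hend : (p.drop i).getVert (j - i) = p.getVert j := by
    rw [Walk.drop_getVert, Nat.add_sub_cancel' hij]
  calc G.dist (p.getVert i) (p.getVert j)
      = G.dist (p.getVert i) ((p.drop i).getVert (j - i)) := by rw [hend]
    _ ≤ ((p.drop i).take (j - i)).length := dist_le _
    _ ≤ j - i := by rw [Walk.take_length]; exact min_le_left _ _

lemma IsShortestPath.dist_getVert {u v : V} {p : G.Walk u v} (hp : IsShortestPath G p)
    {i j : ℕ} (hij : i ≤ j) (hj : j ≤ p.length) :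
    G.dist (p.getVert i) (p.getVert j) = j - i := by
  have hsub : ((p.drop i).take (j - i)).IsSubwalk p :=
    (Walk.isSubwalk_take _ _).trans (Walk.isSubwalk_drop _ _)
  have hlen := length_eq_dist_of_subwalk hp hsub
  rw [Walk.take_length, Walk.drop_length, Walk.drop_getVert, Nat.add_sub_cancel' hij] at hlen
  omega

section ShortestPath

variable (hG : G.Connected) {u v : V} {P : G.Walk u v} (hP : IsShortestPath G P) {k : ℕ}
include hG hP

/- Being more than `2k` from `P.getVert i` forces `ja + k < i` and `i + k < jb`, so the geodesic `P`
puts `P.getVert ja` and `P.getVert jb` more than `2k + 1` apart. -/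
lemma IsShortestPath.one_lt_dist_of_separated {i ja jb : ℕ} {a b : V} (hja : ja ≤ i)
    (hjb : i ≤ jb) (hjbP : jb ≤ P.length) (ha : 2 * k < G.dist (P.getVert i) a)
    (hb : 2 * k < G.dist (P.getVert i) b) (hPa : G.dist (P.getVert ja) a ≤ k)
    (hPb : G.dist (P.getVert jb) b ≤ k) : 1 < G.dist a b := by
  have hja_i := hP.dist_getVert hja (hjb.trans hjbP)
  have hi_jb := hP.dist_getVert hjb hjbP
  have hja_jb := hP.dist_getVert (hja.trans hjb) hjbP
  have t1 : G.dist (P.getVert i) a ≤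
      G.dist (P.getVert i) (P.getVert ja) + G.dist (P.getVert ja) a := hG.dist_triangle
  have t2 : G.dist (P.getVert i) b ≤
      G.dist (P.getVert i) (P.getVert jb) + G.dist (P.getVert jb) b := hG.dist_triangle
  have t3 : G.dist (P.getVert ja) (P.getVert jb) ≤
      G.dist (P.getVert ja) a + G.dist a (P.getVert jb) := hG.dist_triangle
  have t4 : G.dist a (P.getVert jb) ≤ G.dist a b + G.dist b (P.getVert jb) := hG.dist_triangle
  rw [dist_comm (u := P.getVert i) (v := P.getVert ja)] at t1
  rw [dist_comm (u := b)] at t4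
  omega

lemma IsShortestPath.exists_mem_support_dist_le_two_mul_of_le_of_le
    (hcover : ∀ z, ∃ j ≤ P.length, G.dist (P.getVert j) z ≤ k) {x y : V} (Q : G.Walk x y)
    {m i M : ℕ} {a b : V} (hmi : m ≤ i) (hiM : i ≤ M) (hM : M ≤ P.length)
    (ha : a ∈ Q.support) (hb : b ∈ Q.support) (hma : G.dist (P.getVert m) a ≤ k)
    (hMb : G.dist (P.getVert M) b ≤ k) :
    ∃ q ∈ Q.support, G.dist (P.getVert i) q ≤ 2 * k := by
  -- An edge of `Q` leaving the set of vertices that project at or before `i` would join two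
  -- vertices separated at `i`.
  by_contra! hfar
  let S := {w | ∃ j ≤ i, G.dist (P.getVert j) w ≤ k}
  have haS : a ∈ S := ⟨m, hmi, hma⟩
  have hbS : b ∉ S := by
    rintro ⟨j, hji, hPb⟩
    have := hP.one_lt_dist_of_separated hG hji hiM hM (hfar b hb) (hfar b hb) hPb hMb
    simp at this
  obtain ⟨c, hc, d, hd, hcd, ⟨jc, hjci, hPc⟩, hdS⟩ :=
    Q.exists_adj_mem_support_of_mem_of_notMem S ha hb haS hbS
  obtain ⟨jd, hjd, hPd⟩ := hcover d
  have hijd : i ≤ jd := le_of_not_ge fun h => hdS ⟨jd, h, hPd⟩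
  have := hP.one_lt_dist_of_separated hG hjci hijd hjd (hfar c hc) (hfar d hd) hPc hPd
  rw [dist_eq_one_iff_adj.mpr hcd] at this
  exact lt_irrefl _ this

lemma IsShortestPath.exists_mem_support_dist_le_two_mul
    (hcover : ∀ z, ∃ j ≤ P.length, G.dist (P.getVert j) z ≤ k) {x y : V} (Q : G.Walk x y)
    {m i M : ℕ} {a b : V} (hmk : m ≤ k) (hMk : P.length - k ≤ M) (hi : i ≤ P.length)
    (hM : M ≤ P.length) (ha : a ∈ Q.support) (hb : b ∈ Q.support)
    (hma : G.dist (P.getVert m) a ≤ k) (hMb : G.dist (P.getVert M) b ≤ k) :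
    ∃ q ∈ Q.support, G.dist (P.getVert i) q ≤ 2 * k := by
  rcases lt_or_ge i m with him | hmi
  · have him' := P.dist_getVert_le him.le
    have t : G.dist (P.getVert i) a ≤
        G.dist (P.getVert i) (P.getVert m) + G.dist (P.getVert m) a := hG.dist_triangle
    exact ⟨a, ha, by omega⟩
  rcases le_or_gt i M with hiM | hMi
  · exact hP.exists_mem_support_dist_le_two_mul_of_le_of_le hG hcover Q hmi hiM hM ha hb hma hMb
  · have hMi' := P.dist_getVert_le hMi.le
    have t : G.dist (P.getVert i) b ≤
        G.dist (P.getVert i) (P.getVert M) + G.dist (P.getVert M) b := hG.dist_triangle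
    rw [dist_comm (u := P.getVert i) (v := P.getVert M)] at t
    exact ⟨b, hb, by omega⟩

end ShortestPath

end SimpleGraph

theorem stmt5_general [Fintype V] (G : SimpleGraph V) (hG : G.Connected)
    {v0 vt : V} (P : G.Walk v0 vt) (hP : IsShortestPath G P) (k : ℕ)
    (hecc : ∀ z : V, walkDist G z P ≤ k)
    (x y : V) (imin imax : ℕ)
    (himin2 : min (G.dist (P.getVert imin) x) (G.dist (P.getVert imin) y) ≤ k)
    (himax1 : imax ≤ P.length)
    (himax2 : min (G.dist (P.getVert imax) x) (G.dist (P.getVert imax) y) ≤ k)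
    (hlow : imin ≤ k) (hhigh : P.length - k ≤ imax) :
    ∀ Q : G.Walk x y, IsShortestPath G Q → walkEcc G Q ≤ 3 * k := by
  intro Q _
  have hcover z := exists_getVert_dist_le_of_walkDist_le (hecc z)
  have hends {j : ℕ} (h : min (G.dist (P.getVert j) x) (G.dist (P.getVert j) y) ≤ k) :
      ∃ a ∈ Q.support, G.dist (P.getVert j) a ≤ k :=
    (min_le_iff.mp h).elim (⟨x, Q.start_mem_support, ·⟩) (⟨y, Q.end_mem_support, ·⟩)
  obtain ⟨a, ha, hma⟩ := hends himin2
  obtain ⟨b, hb, hMb⟩ := hends himax2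
  refine walkEcc_le_of_forall_exists_dist_le fun z => ?_
  obtain ⟨i, hi, hiz⟩ := hcover z
  obtain ⟨q, hq, hiq⟩ :=
    hP.exists_mem_support_dist_le_two_mul hG hcover Q hlow hhigh hi himax1 ha hb hma hMb
  have t : G.dist z q ≤ G.dist z (P.getVert i) + G.dist (P.getVert i) q := hG.dist_triangle
  rw [dist_comm (u := z) (v := P.getVert i)] at t
  exact ⟨q, hq, by omega⟩

theorem stmt5 [Fintype V] (G : SimpleGraph V) (hG : G.Connected)
    {v0 vt : V} (P : G.Walk v0 vt) (hP : IsShortestPath G P) (k : ℕ)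
    (hecc : ∀ z : V, walkDist G z P ≤ k)
    (x y : V) (imin imax : ℕ)
    (himin1 : imin ≤ P.length)
    (himin2 : min (G.dist (P.getVert imin) x) (G.dist (P.getVert imin) y) ≤ k)
    (himin3 : ∀ i < imin, ¬ min (G.dist (P.getVert i) x) (G.dist (P.getVert i) y) ≤ k)
    (himax1 : imax ≤ P.length)
    (himax2 : min (G.dist (P.getVert imax) x) (G.dist (P.getVert imax) y) ≤ k)
    (himax3 : ∀ i, i ≤ P.length → imax < i →
      ¬ min (G.dist (P.getVert i) x) (G.dist (P.getVert i) y) ≤ k)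
    (hlow : imin ≤ k) (hhigh : P.length - k ≤ imax) :
    ∀ Q : G.Walk x y, IsShortestPath G Q → walkEcc G Q ≤ 3 * k :=
  stmt5_general G hG P hP k hecc x y imin imax himin2 himax1 himax2 hlow hhigh
end
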